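/- arXiv:2010.05425 — 4 statements merged into one kernel-verified Lean document; each statement's English description precedes it below -/
import Mathlib

section
/- Let M_Z^Pl = (1/2)·[[1,-1,1,-1],[-1,1,1,-1],[1,1,1,1],[1,1,-1,-1]] and M_HZ^Pl = (1/2)·[[1,-1,1,1],[-1,1,1,1],[1,1,1,-1],[1,1,-1,1]]. Then (M_Z^Pl)³ = I₄, (M_HZ^Pl)² = I₄, and M_HZ^Pl · M_Z^Pl · M_HZ^Pl = (M_Z^Pl)², so the subgroup of GL₄(ℝ) generated by M_Z^Pl and M_HZ^Pl is isomorphic to the symmetric group S₃. -/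
open Matrix

lemma mul4 (a00 a01 a02 a03 a10 a11 a12 a13 a20 a21 a22 a23 a30 a31 a32 a33 b00 b01 b02 b03 b10 b11 b12 b13 b20 b21 b22 b23 b30 b31 b32 b33 : ℝ) :
    !![a00, a01, a02, a03;
       a10, a11, a12, a13;
       a20, a21, a22, a23;
       a30, a31, a32, a33] *
    !![b00, b01, b02, b03;
       b10, b11, b12, b13;
       b20, b21, b22, b23;
       b30, b31, b32, b33] =
    !![a00*b00 + a01*b10 + a02*b20 + a03*b30, a00*b01 + a01*b11 + a02*b21 + a03*b31, a00*b02 + a01*b12 + a02*b22 + a03*b32, a00*b03 + a01*b13 + a02*b23 + a03*b33;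
       a10*b00 + a11*b10 + a12*b20 + a13*b30, a10*b01 + a11*b11 + a12*b21 + a13*b31, a10*b02 + a11*b12 + a12*b22 + a13*b32, a10*b03 + a11*b13 + a12*b23 + a13*b33;
       a20*b00 + a21*b10 + a22*b20 + a23*b30, a20*b01 + a21*b11 + a22*b21 + a23*b31, a20*b02 + a21*b12 + a22*b22 + a23*b32, a20*b03 + a21*b13 + a22*b23 + a23*b33;
       a30*b00 + a31*b10 + a32*b20 + a33*b30, a30*b01 + a31*b11 + a32*b21 + a33*b31, a30*b02 + a31*b12 + a32*b22 + a33*b32, a30*b03 + a31*b13 + a32*b23 + a33*b33] := by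
  ext i j
  fin_cases i <;> fin_cases j <;> simp [Matrix.mul_apply, Fin.sum_univ_succ, add_assoc]

lemma one4 : (1 : Matrix (Fin 4) (Fin 4) ℝ) = !![1,0,0,0; 0,1,0,0; 0,0,1,0; 0,0,0,1] := by
  ext i j
  fin_cases i <;> fin_cases j <;> rfl

lemma smul4 (r a00 a01 a02 a03 a10 a11 a12 a13 a20 a21 a22 a23 a30 a31 a32 a33 : ℝ) :
    r • !![a00, a01, a02, a03;
       a10, a11, a12, a13;
       a20, a21, a22, a23;
       a30, a31, a32, a33] =
    !![r * a00, r * a01, r * a02, r * a03;r * a10, r * a11, r * a12, r * a13;r * a20, r * a21, r * a22, r * a23;r * a30, r * a31, r * a32, r * a33] := by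
  ext i j
  fin_cases i <;> fin_cases j <;> simp


lemma myPermMatrix_mul {n : Type*} [DecidableEq n] [Fintype n] (σ τ : Equiv.Perm n) :
    (σ * τ).permMatrix ℝ = τ.permMatrix ℝ * σ.permMatrix ℝ := by
  simp only [Equiv.Perm.permMatrix, Equiv.Perm.mul_def, Equiv.toPEquiv_trans,
    PEquiv.toMatrix_trans]

lemma myPermMatrix_one {n : Type*} [DecidableEq n] [Fintype n] :
    ((1 : Equiv.Perm n).permMatrix ℝ) = 1 := by
  simp only [Equiv.Perm.permMatrix, Equiv.Perm.one_def, Equiv.toPEquiv_refl,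
    PEquiv.toMatrix_refl]

lemma permMatrix_apply (σ : Equiv.Perm (Fin 4)) (i j : Fin 4) :
    σ.permMatrix ℝ i j = if σ i = j then 1 else 0 := by
  rw [Equiv.Perm.permMatrix, PEquiv.toMatrix_apply, Equiv.toPEquiv_apply]
  simp [eq_comm]

noncomputable def permGL : Equiv.Perm (Fin 4) →* Matrix.GeneralLinearGroup (Fin 4) ℝ where
  toFun σ := ⟨(σ⁻¹).permMatrix ℝ, σ.permMatrix ℝ,
    by rw [← myPermMatrix_mul, mul_inv_cancel, myPermMatrix_one],
    by rw [← myPermMatrix_mul, inv_mul_cancel, myPermMatrix_one]⟩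
  map_one' := by
    apply Units.ext
    simp [myPermMatrix_one]
  map_mul' σ τ := by
    apply Units.ext
    show ((σ * τ)⁻¹).permMatrix ℝ = (σ⁻¹).permMatrix ℝ * (τ⁻¹).permMatrix ℝ
    rw [_root_.mul_inv_rev, myPermMatrix_mul]

lemma permGL_injective : Function.Injective permGL := by
  intro σ τ h
  have h1 : (σ⁻¹).permMatrix ℝ = (τ⁻¹).permMatrix ℝ := congrArg Units.val h
  have h2 := PEquiv.toMatrix_injective h1
  have h3 : σ⁻¹ = τ⁻¹ := by
    apply Equiv.ext
    intro x
    have := congrFun (congrArg (fun (f : Fin 4 ≃. Fin 4) => (f : Fin 4 → Option (Fin 4))) h2) x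
    simpa [Equiv.toPEquiv_apply] using this
  exact inv_injective h3

def emb3 : Fin 3 ≃ {x : Fin 4 // x.val < 3} where
  toFun a := ⟨⟨a.val, by omega⟩, by simp⟩
  invFun b := ⟨b.1.val, b.2⟩
  left_inv a := rfl
  right_inv b := rfl

def ext3 : Equiv.Perm (Fin 3) →* Equiv.Perm (Fin 4) :=
  Equiv.Perm.extendDomainHom emb3

theorem stmt_2 :
    let MZ : Matrix (Fin 4) (Fin 4) ℝ :=
      (1/2 : ℝ) • !![1, -1, 1, -1; -1, 1, 1, -1; 1, 1, 1, 1; 1, 1, -1, -1]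
    let MHZ : Matrix (Fin 4) (Fin 4) ℝ :=
      (1/2 : ℝ) • !![1, -1, 1, 1; -1, 1, 1, 1; 1, 1, 1, -1; 1, 1, -1, 1]
    MZ ^ 3 = 1 ∧ MHZ ^ 2 = 1 ∧ MHZ * MZ * MHZ = MZ ^ 2 ∧
      ∃ A B : Matrix.GeneralLinearGroup (Fin 4) ℝ,
        (A : Matrix (Fin 4) (Fin 4) ℝ) = MZ ∧ (B : Matrix (Fin 4) (Fin 4) ℝ) = MHZ ∧
        Nonempty ((Subgroup.closure {A, B} : Subgroup (Matrix.GeneralLinearGroup (Fin 4) ℝ))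
          ≃* Equiv.Perm (Fin 3)) := by
  intro MZ MHZ
  have hMZ3 : MZ ^ 3 = 1 := by
    rw [pow_succ, pow_succ, pow_one]
    show ((1/2 : ℝ) • _) * ((1/2 : ℝ) • _) * ((1/2 : ℝ) • _) = 1
    simp only [smul4]
    rw [mul4, mul4, one4]
    norm_num
  have hMHZ2 : MHZ ^ 2 = 1 := by
    rw [pow_succ, pow_one]
    show ((1/2 : ℝ) • _) * ((1/2 : ℝ) • _) = 1
    simp only [smul4]
    rw [mul4, one4]
    norm_num
  have hrel : MHZ * MZ * MHZ = MZ ^ 2 := by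
    rw [pow_succ, pow_one]
    show ((1/2 : ℝ) • _) * ((1/2 : ℝ) • _) * ((1/2 : ℝ) • _) =
      ((1/2 : ℝ) • _) * ((1/2 : ℝ) • _)
    simp only [smul4]
    rw [mul4, mul4, mul4]
    norm_num
  refine ⟨hMZ3, hMHZ2, hrel, ?_⟩
  have hMZinv1 : MZ * ((1/2 : ℝ) • !![1, -1, 1, 1; -1, 1, 1, 1; 1, 1, 1, -1; -1, -1, 1, -1]) = 1 := by
    show ((1/2 : ℝ) • _) * ((1/2 : ℝ) • _) = 1
    simp only [smul4]
    rw [mul4, one4]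
    norm_num
  have hMZinv2 : ((1/2 : ℝ) • !![1, -1, 1, 1; -1, 1, 1, 1; 1, 1, 1, -1; -1, -1, 1, -1]) * MZ = 1 := by
    show ((1/2 : ℝ) • _) * ((1/2 : ℝ) • _) = 1
    simp only [smul4]
    rw [mul4, one4]
    norm_num
  have hMHZinv : MHZ * MHZ = 1 := by rw [← pow_two]; exact hMHZ2
  set A : Matrix.GeneralLinearGroup (Fin 4) ℝ :=
    ⟨MZ, (1/2 : ℝ) • !![1, -1, 1, 1; -1, 1, 1, 1; 1, 1, 1, -1; -1, -1, 1, -1], hMZinv1, hMZinv2⟩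
    with hA
  set B : Matrix.GeneralLinearGroup (Fin 4) ℝ := ⟨MHZ, MHZ, hMHZinv, hMHZinv⟩ with hB
  refine ⟨A, B, rfl, rfl, ?_⟩
  set P : Matrix (Fin 4) (Fin 4) ℝ := !![0,0,2,0; 1,1,1,-1; 1,1,1,1; 0,1,1,0] with hPdef
  set Q : Matrix (Fin 4) (Fin 4) ℝ :=
    !![0,1/2,1/2,-1; -1/2,0,0,1; 1/2,0,0,0; 0,-1/2,1/2,0] with hQdef
  have hPQ : P * Q = 1 := by
    rw [hPdef, hQdef, mul4, one4]
    norm_num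
  have hQP : Q * P = 1 := by
    rw [hPdef, hQdef, mul4, one4]
    norm_num
  set Pu : Matrix.GeneralLinearGroup (Fin 4) ℝ := ⟨P, Q, hPQ, hQP⟩ with hPu
  set φ : Equiv.Perm (Fin 3) →* Matrix.GeneralLinearGroup (Fin 4) ℝ :=
    ((MulAut.conj Pu⁻¹).toMonoidHom.comp (permGL.comp ext3)) with hφ
  have hφinj : Function.Injective φ := by
    have h1 : Function.Injective (⇑(MulAut.conj Pu⁻¹) ∘ ⇑permGL ∘ ⇑ext3) :=
      (MulAut.conj Pu⁻¹).injective.comp (permGL_injective.comp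
        (Equiv.Perm.extendDomainHom_injective emb3))
    exact h1
  set c : Equiv.Perm (Fin 3) := finRotate 3 with hc
  set t : Equiv.Perm (Fin 3) := Equiv.swap 0 (c 0) with ht
  have htop : Subgroup.closure ({c, t} : Set (Equiv.Perm (Fin 3))) = ⊤ :=
    Equiv.Perm.closure_cycle_adjacent_swap (isCycle_finRotate_of_le (by norm_num))
      (support_finRotate_of_le (by norm_num)) 0
  have hswapc : (ext3 c)⁻¹ = Equiv.swap 1 2 * Equiv.swap 0 1 := Equiv.ext (by decide)
  have hswapt : (ext3 t)⁻¹ = Equiv.swap 0 1 := Equiv.ext (by decide)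
  have hMc : ((ext3 c)⁻¹).permMatrix ℝ = !![0,0,1,0; 1,0,0,0; 0,1,0,0; 0,0,0,1] := by
    rw [hswapc]
    ext i j
    fin_cases i <;> fin_cases j <;> simp +decide [permMatrix_apply, Matrix.vecHead, Matrix.vecTail]
  have hMt : ((ext3 t)⁻¹).permMatrix ℝ = !![0,1,0,0; 1,0,0,0; 0,0,1,0; 0,0,0,1] := by
    rw [hswapt]
    ext i j
    fin_cases i <;> fin_cases j <;> simp +decide [permMatrix_apply, Matrix.vecHead, Matrix.vecTail]
  have hφc : φ c = A := by
    apply Units.ext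
    show Q * ((ext3 c)⁻¹).permMatrix ℝ * P = MZ
    rw [hMc, hQdef, hPdef, mul4, mul4]
    show _ = (1/2 : ℝ) • _
    rw [smul4]
    norm_num
  have hφt : φ t = B := by
    apply Units.ext
    show Q * ((ext3 t)⁻¹).permMatrix ℝ * P = MHZ
    rw [hMt, hQdef, hPdef, mul4, mul4]
    show _ = (1/2 : ℝ) • _
    rw [smul4]
    norm_num
  have hrange : Subgroup.closure ({A, B} : Set (Matrix.GeneralLinearGroup (Fin 4) ℝ))
      = φ.range := by
    rw [MonoidHom.range_eq_map, ← htop, MonoidHom.map_closure]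
    congr 1
    rw [Set.image_insert_eq, Set.image_singleton, hφc, hφt]
  exact ⟨(MulEquiv.subgroupCongr hrange).trans (MonoidHom.ofInjective hφinj).symm⟩
end

section
/- Let a,b,c,d ≥ 0 and let (a',b',c',d')ᵀ = (1/2)·[[1,-1,1,1],[-1,1,1,1],[1,1,1,-1],[1,1,-1,1]]·(a,b,c,d)ᵀ. If a+d ≤ b+c, b+d ≤ a+c, c+d ≥ a+b, and c ≤ a+b+d, then a',b',c',d' ≥ 0 and a'+d' ≤ b'+c', b'+d' ≤ a'+c', c'+d' ≤ a'+b'. (The planar holographic map M_HZ^Pl sends the region 𝒜𝒟 ∩ ℬ𝒟 ∩ (complement of 𝒞𝒟) ∩ 𝒞 into the region 𝒴.) -/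
theorem stmt_9 (a b c d : ℝ) (ha : 0 ≤ a) (hb : 0 ≤ b) (hc : 0 ≤ c) (hd : 0 ≤ d)
    (h1 : a + d ≤ b + c) (h2 : b + d ≤ a + c) (h3 : a + b ≤ c + d) (h4 : c ≤ a + b + d)
    (a' b' c' d' : ℝ)
    (hmap : ![a', b', c', d'] =
      ((1/2 : ℝ) • !![1, -1, 1, 1; -1, 1, 1, 1; 1, 1, 1, -1; 1, 1, -1, 1]).mulVec
        ![a, b, c, d]) :
    0 ≤ a' ∧ 0 ≤ b' ∧ 0 ≤ c' ∧ 0 ≤ d' ∧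
      a' + d' ≤ b' + c' ∧ b' + d' ≤ a' + c' ∧ c' + d' ≤ a' + b' := by
  have ea : a' = (a - b + c + d) / 2 := by
    have := congrFun hmap 0
    simp [Matrix.mulVec, dotProduct, Fin.sum_univ_four] at this; linarith
  have eb : b' = (-a + b + c + d) / 2 := by
    have := congrFun hmap 1
    simp [Matrix.mulVec, dotProduct, Fin.sum_univ_four] at this; linarith
  have ec : c' = (a + b + c - d) / 2 := by
    have := congrFun hmap 2
    simp [Matrix.mulVec, dotProduct, Fin.sum_univ_four] at this; linarith
  have ed : d' = (a + b - c + d) / 2 := by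
    have := congrFun hmap 3
    simp [Matrix.mulVec, dotProduct, Fin.sum_univ_four] at this; linarith
  subst ea eb ec ed
  refine ⟨by linarith, by linarith, by linarith, by linarith, by linarith, by linarith, by linarith⟩
end

section
/- Let a,b,c,d ≥ 0 satisfy a+d ≥ b+c, b+d ≥ a+c, c+d ≥ a+b, and d ≤ a+b+c, and let (a',b',c',d')ᵀ = (1/2)·[[-1,1,1,1],[1,-1,1,1],[1,1,-1,1],[1,1,1,-1]]·(a,b,c,d)ᵀ. Then a',b',c',d' ≥ 0 and a'+d' ≤ b'+c', b'+d' ≤ a'+c', c'+d' ≤ a'+b'. (The bipartite holographic map M_HZ sends the region (complement of 𝒜𝒟)∩(complement of ℬ𝒟)∩(complement of 𝒞𝒟)∩𝒟 into 𝒴.) -/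
theorem stmt_11 (a b c d : ℝ) (ha : 0 ≤ a) (hb : 0 ≤ b) (hc : 0 ≤ c) (hd : 0 ≤ d)
    (h1 : b + c ≤ a + d) (h2 : a + c ≤ b + d) (h3 : a + b ≤ c + d) (h4 : d ≤ a + b + c)
    (a' b' c' d' : ℝ)
    (hmap : ![a', b', c', d'] =
      ((1/2 : ℝ) • !![-1, 1, 1, 1; 1, -1, 1, 1; 1, 1, -1, 1; 1, 1, 1, -1]).mulVec
        ![a, b, c, d]) :
    0 ≤ a' ∧ 0 ≤ b' ∧ 0 ≤ c' ∧ 0 ≤ d' ∧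
      a' + d' ≤ b' + c' ∧ b' + d' ≤ a' + c' ∧ c' + d' ≤ a' + b' := by
  have e0 := congrFun hmap 0
  have e1 := congrFun hmap 1
  have e2 := congrFun hmap 2
  have e3 := congrFun hmap 3
  simp [Matrix.mulVec, dotProduct, Fin.sum_univ_succ] at e0 e1 e2 e3
  refine ⟨?_, ?_, ?_, ?_, ?_, ?_, ?_⟩ <;> linarith
end

section
/- Let n ≥ 1 and let f : ({0,1})ⁿ → ℝ be a real-valued function, regarded as a vector in ℂ^{2ⁿ}. Let Z = (1/√2)·[[1,1],[i,-i]]. Then f satisfies arrow reversal symmetry, i.e. f(a₁,…,aₙ) = f(1-a₁,…,1-aₙ) for all (a₁,…,aₙ) ∈ {0,1}ⁿ, if and only if the vector Z^{⊗n}·f has all real entries. -/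
/-!
Complex conjugation swaps the two columns of `Z`, hence conjugating `Z^{⊗n}` amounts to
reversing all arrows of the column index. For real `f` this gives
`conj (Z^{⊗n} f) = Z^{⊗n} (f ∘ flip)`, so `Z^{⊗n} f` is real iff `Z^{⊗n} f = Z^{⊗n} (f ∘ flip)`,
and since `Z` is unitary, so is `Z^{⊗n}`, which is therefore injective.
-/

open Complex ComplexConjugate

namespace Matrix

variable {ι l m n R : Type*} [Fintype ι]

def kroneckerPow (ι : Type*) [Fintype ι] [CommMonoid R] (M : Matrix m n R) :
    Matrix (ι → m) (ι → n) R :=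
  of fun a b => ∏ i, M (a i) (b i)

@[simp]
theorem kroneckerPow_apply [CommMonoid R] (M : Matrix m n R) (a : ι → m) (b : ι → n) :
    kroneckerPow ι M a b = ∏ i, M (a i) (b i) := rfl

theorem kroneckerPow_mul [DecidableEq ι] [Fintype m] [CommSemiring R]
    (M : Matrix l m R) (N : Matrix m n R) :
    kroneckerPow ι M * kroneckerPow ι N = kroneckerPow ι (M * N) := by
  ext a c
  simp only [mul_apply, kroneckerPow_apply, Fintype.prod_sum, Finset.prod_mul_distrib]

theorem kroneckerPow_one [DecidableEq m] [CommSemiring R] :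
    kroneckerPow ι (1 : Matrix m m R) = 1 := by
  ext a b
  simp only [kroneckerPow_apply, one_apply, Finset.prod_boole, Finset.mem_univ, forall_const,
    funext_iff]

theorem kroneckerPow_map {S : Type*} [CommSemiring R] [CommSemiring S] (M : Matrix m n R)
    (f : R →+* S) : (kroneckerPow ι M).map f = kroneckerPow ι (M.map f) := by
  ext a b
  simp

theorem kroneckerPow_submatrix [CommMonoid R] {o p : Type*} (M : Matrix m n R) (e₁ : o → m)
    (e₂ : p → n) :
    kroneckerPow ι (M.submatrix e₁ e₂) = (kroneckerPow ι M).submatrix (e₁ ∘ ·) (e₂ ∘ ·) := rfl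

theorem mulVec_injective_kroneckerPow [DecidableEq ι] [Fintype m] [DecidableEq m] [CommSemiring R]
    {M N : Matrix m m R} (h : N * M = 1) : Function.Injective (kroneckerPow ι M).mulVec := by
  intro v w hvw
  simpa [mulVec_mulVec, kroneckerPow_mul, h, kroneckerPow_one] using
    congrArg (kroneckerPow ι N).mulVec hvw

theorem conj_kroneckerPow_mulVec_ofReal [DecidableEq ι] [Fintype n] {M : Matrix n n ℂ}
    (σ : Equiv.Perm n) (hM : M.map conj = M.submatrix id σ) (v : (ι → n) → ℝ) :
    (fun a => conj ((kroneckerPow ι M *ᵥ fun b => (v b : ℂ)) a)) =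
      kroneckerPow ι M *ᵥ fun b => (v (σ.symm ∘ b) : ℂ) := by
  funext a
  have hv : (conj ∘ fun b => (v b : ℂ)) = fun b => (v b : ℂ) := funext fun _ => conj_ofReal _
  rw [RingHom.map_mulVec, kroneckerPow_map, hM, kroneckerPow_submatrix, hv]
  exact congrFun (submatrix_mulVec_equiv (kroneckerPow ι M) _ id (.piCongrRight fun _ => σ)) a

end Matrix

open Matrix

noncomputable def zMatrix : Matrix (Fin 2) (Fin 2) ℂ :=
  ((Real.sqrt 2)⁻¹ : ℝ) • !![1, 1; I, -I]

theorem zMatrix_conjTranspose_mul_self : zMatrixᴴ * zMatrix = 1 := by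
  have h : (Real.sqrt 2 : ℂ) ^ 2 = 2 := by
    rw [← ofReal_pow, Real.sq_sqrt zero_le_two, ofReal_ofNat]
  ext i j
  fin_cases i <;> fin_cases j <;>
    simp [zMatrix, mul_apply, Fin.sum_univ_two, real_smul] <;> ring_nf <;> simp [h] <;> norm_num

theorem zMatrix_map_conj : zMatrix.map conj = zMatrix.submatrix id (Equiv.subLeft 1) := by
  ext i j
  fin_cases i <;> fin_cases j <;> simp [zMatrix, real_smul]

theorem stmt_14_general (n : ℕ) (f : (Fin n → Fin 2) → ℝ) :
    let Z : Matrix (Fin 2) (Fin 2) ℂ :=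
      ((Real.sqrt 2)⁻¹ : ℝ) • !![1, 1; Complex.I, -Complex.I]
    let Zn : Matrix (Fin n → Fin 2) (Fin n → Fin 2) ℂ :=
      fun a b => ∏ i, Z (a i) (b i)
    ((∀ a : Fin n → Fin 2, f a = f (fun i => 1 - a i)) ↔
      ∀ a : Fin n → Fin 2, (Zn.mulVec (fun x => (f x : ℂ)) a).im = 0) := by
  intro Z Zn
  set w := kroneckerPow (Fin n) zMatrix *ᵥ fun x => (f x : ℂ)
  change _ ↔ ∀ a, (w a).im = 0
  have hreal : (∀ a, (w a).im = 0) ↔ (fun a => conj (w a)) = w := by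
    simp only [funext_iff, conj_eq_iff_im]
  have hflip (a : Fin n → Fin 2) : (Equiv.subLeft 1).symm ∘ a = fun i => 1 - a i := by
    funext i; simp [sub_eq_neg_add]
  rw [hreal, conj_kroneckerPow_mulVec_ofReal _ zMatrix_map_conj,
    (mulVec_injective_kroneckerPow zMatrix_conjTranspose_mul_self).eq_iff]
  simp only [hflip, funext_iff, ofReal_inj]
  exact forall_congr' fun _ => eq_comm

theorem stmt_14 (n : ℕ) (hn : 1 ≤ n) (f : (Fin n → Fin 2) → ℝ) :
    let Z : Matrix (Fin 2) (Fin 2) ℂ :=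
      ((Real.sqrt 2)⁻¹ : ℝ) • !![1, 1; Complex.I, -Complex.I]
    let Zn : Matrix (Fin n → Fin 2) (Fin n → Fin 2) ℂ :=
      fun a b => ∏ i, Z (a i) (b i)
    ((∀ a : Fin n → Fin 2, f a = f (fun i => 1 - a i)) ↔
      ∀ a : Fin n → Fin 2, (Zn.mulVec (fun x => (f x : ℂ)) a).im = 0) :=
  stmt_14_general n f
end
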